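/- Suppose the n×n symmetric matrix A satisfies A_{ii}=1 and A_{ij}=A_{ji} ~ Bernoulli(p) independently for i<j (Erdős–Rényi model with self loops), T is a random assignment vector in {0,1}^n independent of A satisfying T_{2m-1}+T_{2m}=1 with (T_{2m-1},T_{2m}) equal to (0,1) or (1,0) with probability 1/2 each, independently across pairs, and n is even. Then E[‖A(1_n - 2T)‖²] = n² p(1-p) + n(1-2p)(1-p). Consequently, lim_{n→∞} E[‖A(1_n - 2T)‖²]/n² = p(1-p). -/

import Mathlib

/-!
Put `sₘ = 1 - 2 T_{2m} ∈ {±1}`. Since `T_{2m+1} = 1 - T_{2m}`, row `i` of `A (1ₙ - 2T)` is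
`∑ₘ (A_{i,2m} - A_{i,2m+1}) sₘ`. Each sign `s_{m'}` is centred and independent of all the other
coordinates of the design, so the cross terms of the square have mean zero and
`E[row_i²] = ∑ₘ E[(A_{i,2m} - A_{i,2m+1})²]`. That summand is `1 - p` for the pair containing `i`
(one entry is the self loop) and `2p(1-p)` for the other `k - 1` pairs.
-/

open MeasureTheory ProbabilityTheory Filter

-- The paper's 1-based pair `(2m-1, 2m)` is `(2m, 2m+1)` here.
def Fin.pairFst {k : ℕ} (m : Fin k) : Fin (2 * k) := ⟨2 * m, by omega⟩

def Fin.pairSnd {k : ℕ} (m : Fin k) : Fin (2 * k) := ⟨2 * m + 1, by omega⟩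

def Fin.half {k : ℕ} (i : Fin (2 * k)) : Fin k := ⟨i / 2, by omega⟩

theorem Fin.half_eq_iff {k : ℕ} (i : Fin (2 * k)) (m : Fin k) :
    i.half = m ↔ i = m.pairFst ∨ i = m.pairSnd := by
  simp only [Fin.half, Fin.pairFst, Fin.pairSnd, Fin.ext_iff]
  omega

theorem Fin.sum_eq_sum_pairs {M : Type*} [AddCommMonoid M] {k : ℕ} (g : Fin (2 * k) → M) :
    ∑ j, g j = ∑ m : Fin k, (g m.pairFst + g m.pairSnd) := by
  rw [← (finProdFinEquiv.trans (finCongr (mul_comm k 2))).sum_comp, Fintype.sum_prod_type]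
  refine Finset.sum_congr rfl fun m _ => ?_
  rw [Fin.sum_univ_two]
  congr 2 <;> ext <;> simp [Fin.pairFst, Fin.pairSnd, mul_comm, add_comm]

theorem Fin.pairFst_ne_pairSnd {k : ℕ} (m : Fin k) : m.pairFst ≠ m.pairSnd := by
  simp [Fin.pairFst, Fin.pairSnd, Fin.ext_iff]

theorem sum_mul_one_sub_two_mul_eq_sum_pairs {k : ℕ} (a t : Fin (2 * k) → ℝ)
    (ht : ∀ m : Fin k, t m.pairFst + t m.pairSnd = 1) :
    ∑ j, a j * (1 - 2 * t j) =
      ∑ m : Fin k, (a m.pairFst - a m.pairSnd) * (1 - 2 * t m.pairFst) := by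
  rw [Fin.sum_eq_sum_pairs]
  refine Finset.sum_congr rfl fun m _ => ?_
  rw [eq_sub_of_add_eq' (ht m)]
  ring

def sortedPair {α : Type*} [LinearOrder α] {a b : α} (h : a ≠ b) : {q : α × α // q.1 < q.2} :=
  ⟨(min a b, max a b), min_lt_max.2 h⟩

theorem sortedPair_inj {α : Type*} [LinearOrder α] {a b c : α} (hab : a ≠ b) (hac : a ≠ c) :
    sortedPair hab = sortedPair hac ↔ b = c := by
  refine ⟨fun h => ?_, fun h => by subst h; rfl⟩
  simp only [sortedPair, Subtype.mk.injEq, Prod.mk.injEq, min_def, max_def] at h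
  grind

theorem apply_min_max_of_symm {α β : Type*} [LinearOrder α] {f : α → α → β}
    (hf : ∀ a b, f a b = f b a) (a b : α) : f (min a b) (max a b) = f a b := by
  rcases le_total a b with h | h
  · rw [min_eq_left h, max_eq_right h]
  · rw [min_eq_right h, max_eq_left h, hf]

theorem measurable_iSup_comap_of_mem {Ω ι : Type*} {β : ι → Type*}
    [mβ : ∀ i, MeasurableSpace (β i)] (f : ∀ i, Ω → β i) {S : Set ι} {i : ι} (hi : i ∈ S) :
    Measurable[⨆ j ∈ S, (mβ j).comap (f j)] (f i) :=
  (comap_measurable (f i)).mono (le_iSup₂ (f := fun j _ => (mβ j).comap (f j)) i hi) le_rfl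

section Probability

variable {Ω : Type*} [MeasurableSpace Ω] {μ : Measure Ω}

theorem integral_eq_measureReal_of_forall_eq_zero_or_one {X : Ω → ℝ} (hX : Measurable X)
    (h01 : ∀ ω, X ω = 0 ∨ X ω = 1) : ∫ ω, X ω ∂μ = μ.real {ω | X ω = 1} :=
  calc ∫ ω, X ω ∂μ = ∫ ω, {ω | X ω = 1}.indicator 1 ω ∂μ :=
        integral_congr_ae <| .of_forall fun ω => by rcases h01 ω with h | h <;> simp [h]
    _ = μ.real {ω | X ω = 1} := integral_indicator_one (hX (measurableSet_singleton 1))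

theorem memLp_top_of_forall_eq_zero_or_one {X : Ω → ℝ} (hX : Measurable X)
    (h01 : ∀ ω, X ω = 0 ∨ X ω = 1) : MemLp X ⊤ μ :=
  memLp_top_of_bound hX.aestronglyMeasurable 1 <| .of_forall fun ω => by
    rcases h01 ω with h | h <;> simp [h]

theorem integral_sq_sum_of_integral_mul_eq_zero {ι : Type*} [Fintype ι] {Y : ι → Ω → ℝ}
    (hY : ∀ m, MemLp (Y m) 2 μ) (horth : ∀ m m', m ≠ m' → ∫ ω, Y m ω * Y m' ω ∂μ = 0) :
    ∫ ω, (∑ m, Y m ω) ^ 2 ∂μ = ∑ m, ∫ ω, Y m ω ^ 2 ∂μ := by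
  have hint : ∀ m m', Integrable (fun ω => Y m ω * Y m' ω) μ :=
    fun m m' => (hY m).integrable_mul (hY m')
  simp_rw [sq, Finset.sum_mul_sum]
  rw [integral_finsetSum _ fun m _ => integrable_finsetSum _ fun m' _ => hint m m']
  refine Finset.sum_congr rfl fun m _ => ?_
  rw [integral_finsetSum _ fun m' _ => hint m m']
  exact Finset.sum_eq_single m (fun m' _ h => horth m m' h.symm) (by simp)

theorem ProbabilityTheory.iIndepFun.indepFun_of_measurable_iSup {ι : Type*} {β : ι → Type*}
    [mβ : ∀ i, MeasurableSpace (β i)] {f : ∀ i, Ω → β i} (hf : iIndepFun f μ)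
    (hmeas : ∀ i, Measurable (f i)) {S T : Set ι} (hST : Disjoint S T) {X Y : Ω → ℝ}
    (hX : Measurable[⨆ i ∈ S, (mβ i).comap (f i)] X)
    (hY : Measurable[⨆ i ∈ T, (mβ i).comap (f i)] Y) : IndepFun X Y μ := by
  rw [IndepFun_iff_Indep]
  have h := indep_iSup_of_disjoint (fun i => (hmeas i).comap_le)
    ((iIndepFun_iff_iIndep _ _ _).1 hf) hST
  exact indep_of_indep_of_le_right (indep_of_indep_of_le_left h hX.comap_le) hY.comap_le

end Probability

abbrev PairedDesignIndex (k : ℕ) := {q : Fin (2 * k) × Fin (2 * k) // q.1 < q.2} ⊕ Fin k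

def designVariables {Ω : Type*} {k : ℕ} (A : Ω → Matrix (Fin (2 * k)) (Fin (2 * k)) ℝ)
    (T : Ω → Fin (2 * k) → ℝ) : PairedDesignIndex k → Ω → ℝ :=
  Sum.elim (fun e ω => A ω e.1.1 e.1.2) (fun m ω => T ω m.pairFst)

structure IsPairedERDesign {Ω : Type*} [MeasurableSpace Ω] (μ : Measure Ω) (p : ℝ) {k : ℕ}
    (A : Ω → Matrix (Fin (2 * k)) (Fin (2 * k)) ℝ) (T : Ω → Fin (2 * k) → ℝ) : Prop where
  measurable_adj : ∀ i j, Measurable fun ω => A ω i j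
  adj_self : ∀ ω i, A ω i i = 1
  adj_symm : ∀ ω i j, A ω i j = A ω j i
  adj_eq_zero_or_one_of_lt : ∀ ω i j, i < j → A ω i j = 0 ∨ A ω i j = 1
  measure_adj_eq_one : ∀ i j, i < j → μ {ω | A ω i j = 1} = ENNReal.ofReal p
  measurable_assign : ∀ i, Measurable fun ω => T ω i
  assign_eq_zero_or_one : ∀ ω i, T ω i = 0 ∨ T ω i = 1
  assign_pairFst_add_pairSnd : ∀ ω (m : Fin k), T ω m.pairFst + T ω m.pairSnd = 1
  measure_assign_eq_one : ∀ m : Fin k, μ {ω | T ω m.pairFst = 1} = 1 / 2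
  iIndepFun_designVariables : iIndepFun (designVariables A T) μ

namespace IsPairedERDesign

variable {Ω : Type*} [MeasurableSpace Ω] {μ : Measure Ω} {p : ℝ} {k : ℕ}
  {A : Ω → Matrix (Fin (2 * k)) (Fin (2 * k)) ℝ} {T : Ω → Fin (2 * k) → ℝ}

theorem adj_eq_zero_or_one (hD : IsPairedERDesign μ p A T) (ω : Ω) (i j : Fin (2 * k)) :
    A ω i j = 0 ∨ A ω i j = 1 := by
  rcases lt_trichotomy i j with h | rfl | h
  · exact hD.adj_eq_zero_or_one_of_lt ω i j h
  · exact .inr (hD.adj_self ω i)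
  · rw [hD.adj_symm]
    exact hD.adj_eq_zero_or_one_of_lt ω j i h

theorem designVariables_sortedPair (hD : IsPairedERDesign μ p A T) {a b : Fin (2 * k)}
    (h : a ≠ b) : designVariables A T (.inl (sortedPair h)) = fun ω => A ω a b :=
  funext fun ω => apply_min_max_of_symm (hD.adj_symm ω) a b

theorem measurable_designVariables (hD : IsPairedERDesign μ p A T) (x : PairedDesignIndex k) :
    Measurable (designVariables A T x) := by
  rcases x with e | m
  · exact hD.measurable_adj _ _
  · exact hD.measurable_assign _

theorem memLp_adj (hD : IsPairedERDesign μ p A T) (i j : Fin (2 * k)) :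
    MemLp (fun ω => A ω i j) ⊤ μ :=
  memLp_top_of_forall_eq_zero_or_one (hD.measurable_adj i j) (hD.adj_eq_zero_or_one · i j)

theorem memLp_assign (hD : IsPairedERDesign μ p A T) (i : Fin (2 * k)) :
    MemLp (fun ω => T ω i) ⊤ μ :=
  memLp_top_of_forall_eq_zero_or_one (hD.measurable_assign i) (hD.assign_eq_zero_or_one · i)

theorem integral_adj (hD : IsPairedERDesign μ p A T) (hp : 0 ≤ p) {a b : Fin (2 * k)}
    (h : a ≠ b) : ∫ ω, A ω a b ∂μ = p := by
  have hmeas := hD.measure_adj_eq_one _ _ (min_lt_max.2 h)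
  simp only [apply_min_max_of_symm (hD.adj_symm _)] at hmeas
  rw [integral_eq_measureReal_of_forall_eq_zero_or_one (hD.measurable_adj a b)
    (hD.adj_eq_zero_or_one · a b), measureReal_def, hmeas, ENNReal.toReal_ofReal hp]

theorem integral_adj_mul_adj (hD : IsPairedERDesign μ p A T) (hp : 0 ≤ p) {i a b : Fin (2 * k)}
    (hia : i ≠ a) (hib : i ≠ b) (hab : a ≠ b) :
    ∫ ω, A ω i a * A ω i b ∂μ = p * p := by
  have hind : IndepFun (fun ω => A ω i a) (fun ω => A ω i b) μ := by
    rw [← hD.designVariables_sortedPair hia, ← hD.designVariables_sortedPair hib]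
    exact hD.iIndepFun_designVariables.indepFun (by simpa [sortedPair_inj] using hab)
  refine (hind.integral_mul_eq_mul_integral (hD.measurable_adj i a).aestronglyMeasurable
    (hD.measurable_adj i b).aestronglyMeasurable).trans ?_
  rw [integral_adj hD hp hia, integral_adj hD hp hib]

theorem sq_one_sub_two_mul_assign (hD : IsPairedERDesign μ p A T) (ω : Ω) (i : Fin (2 * k)) :
    (1 - 2 * T ω i) ^ 2 = 1 := by
  rcases hD.assign_eq_zero_or_one ω i with h | h <;> norm_num [h]

theorem integral_one_sub_two_mul_assign [IsProbabilityMeasure μ] (hD : IsPairedERDesign μ p A T)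
    (m : Fin k) : ∫ ω, (1 - 2 * T ω m.pairFst) ∂μ = 0 := by
  rw [integral_sub (integrable_const 1) ((hD.memLp_assign _).integrable le_top |>.const_mul 2),
    integral_const_mul, integral_eq_measureReal_of_forall_eq_zero_or_one
      (hD.measurable_assign _) (hD.assign_eq_zero_or_one · _),
    measureReal_def, hD.measure_assign_eq_one]
  norm_num

theorem integral_sq_adj_sub_adj [IsProbabilityMeasure μ] (hD : IsPairedERDesign μ p A T)
    (hp : 0 ≤ p) (i : Fin (2 * k)) {a b : Fin (2 * k)} (hab : a ≠ b) :
    ∫ ω, (A ω i a - A ω i b) ^ 2 ∂μ =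
      2 * p * (1 - p) + if i = a ∨ i = b then (1 - p) * (1 - 2 * p) else 0 := by
  have hsq : ∀ ω, (A ω i a - A ω i b) ^ 2 = A ω i a + A ω i b - 2 * (A ω i a * A ω i b) := by
    intro ω
    rcases hD.adj_eq_zero_or_one ω i a with h | h <;>
      rcases hD.adj_eq_zero_or_one ω i b with h' | h' <;> norm_num [h, h']
  have hint : ∀ j, Integrable (fun ω => A ω i j) μ :=
    fun j => (hD.memLp_adj i j).integrable le_top
  have hint_add : Integrable (fun ω => A ω i a + A ω i b) μ := (hint a).add (hint b)
  have hint_mul : Integrable (fun ω => A ω i a * A ω i b) μ :=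
    ((hD.memLp_adj i b).mul (hD.memLp_adj i a)).integrable le_top
  simp_rw [hsq]
  rw [integral_sub hint_add (hint_mul.const_mul 2), integral_add (hint a) (hint b),
    integral_const_mul]
  split_ifs with hi
  · rcases hi with rfl | rfl
    · simp only [hD.adj_self, one_mul, integral_const, probReal_univ, smul_eq_mul,
        hD.integral_adj hp hab]
      ring
    · simp only [hD.adj_self, mul_one, integral_const, probReal_univ, smul_eq_mul,
        hD.integral_adj hp hab.symm]
      ring
  · obtain ⟨hia, hib⟩ := not_or.1 hi
    rw [hD.integral_adj hp hia, hD.integral_adj hp hib, hD.integral_adj_mul_adj hp hia hib hab]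
    ring

theorem measurable_adj_iSup_comap (hD : IsPairedERDesign μ p A T) {S : Set (PairedDesignIndex k)}
    (hS : ∀ e, .inl e ∈ S) (a b : Fin (2 * k)) :
    Measurable[⨆ x ∈ S, MeasurableSpace.comap (designVariables A T x) inferInstance]
      fun ω => A ω a b := by
  by_cases hab : a = b
  · subst hab
    simp only [hD.adj_self]
    exact measurable_const
  · rw [← hD.designVariables_sortedPair hab]
    exact measurable_iSup_comap_of_mem _ (hS _)

theorem integral_mul_eq_zero_of_ne [IsProbabilityMeasure μ]
    (hD : IsPairedERDesign μ p A T) (i : Fin (2 * k)) {m m' : Fin k} (h : m ≠ m') :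
    ∫ ω, (A ω i m.pairFst - A ω i m.pairSnd) * (1 - 2 * T ω m.pairFst) *
      ((A ω i m'.pairFst - A ω i m'.pairSnd) * (1 - 2 * T ω m'.pairFst)) ∂μ = 0 := by
  have hS : ∀ e, .inl e ∈ ({.inr m'}ᶜ : Set (PairedDesignIndex k)) := by simp
  have hX : Measurable[⨆ x ∈ ({.inr m'}ᶜ : Set (PairedDesignIndex k)),
      MeasurableSpace.comap (designVariables A T x) inferInstance] fun ω =>
        (A ω i m.pairFst - A ω i m.pairSnd) * (1 - 2 * T ω m.pairFst) *
          (A ω i m'.pairFst - A ω i m'.pairSnd) :=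
    (((hD.measurable_adj_iSup_comap hS _ _).sub (hD.measurable_adj_iSup_comap hS _ _)).mul
      (measurable_const.sub ((measurable_iSup_comap_of_mem (designVariables A T) (i := .inr m)
        (by simpa using h)).const_mul 2))).mul
      ((hD.measurable_adj_iSup_comap hS _ _).sub (hD.measurable_adj_iSup_comap hS _ _))
  have hY : Measurable[⨆ x ∈ ({.inr m'} : Set (PairedDesignIndex k)),
      MeasurableSpace.comap (designVariables A T x) inferInstance]
        fun ω => 1 - 2 * T ω m'.pairFst :=
    measurable_const.sub
      ((measurable_iSup_comap_of_mem (designVariables A T) (Set.mem_singleton _)).const_mul 2)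
  have hle : (⨆ x ∈ ({.inr m'}ᶜ : Set (PairedDesignIndex k)),
      MeasurableSpace.comap (designVariables A T x) inferInstance) ≤ ‹MeasurableSpace Ω› :=
    iSup₂_le fun x _ => (hD.measurable_designVariables x).comap_le
  calc _ = ∫ ω, ((A ω i m.pairFst - A ω i m.pairSnd) * (1 - 2 * T ω m.pairFst) *
        (A ω i m'.pairFst - A ω i m'.pairSnd)) * (1 - 2 * T ω m'.pairFst) ∂μ := by
        simp only [mul_assoc]
    _ = (∫ ω, (A ω i m.pairFst - A ω i m.pairSnd) * (1 - 2 * T ω m.pairFst) *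
        (A ω i m'.pairFst - A ω i m'.pairSnd) ∂μ) * ∫ ω, 1 - 2 * T ω m'.pairFst ∂μ :=
      (hD.iIndepFun_designVariables.indepFun_of_measurable_iSup hD.measurable_designVariables
        disjoint_compl_left hX hY).integral_mul_eq_mul_integral
        (hX.mono hle le_rfl).aestronglyMeasurable
        (measurable_const.sub ((hD.measurable_assign _).const_mul 2)).aestronglyMeasurable
    _ = 0 := by rw [hD.integral_one_sub_two_mul_assign, mul_zero]

theorem memLp_mul_one_sub_two_mul_assign (hD : IsPairedERDesign μ p A T) {X : Ω → ℝ}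
    (hX : MemLp X ⊤ μ) (j : Fin (2 * k)) : MemLp (fun ω => X ω * (1 - 2 * T ω j)) ⊤ μ :=
  ((memLp_top_const 1).sub ((hD.memLp_assign j).const_mul 2)).mul hX

theorem integral_sq_row [IsProbabilityMeasure μ] (hD : IsPairedERDesign μ p A T) (hp : 0 ≤ p)
    (i : Fin (2 * k)) :
    ∫ ω, (∑ j, A ω i j * (1 - 2 * T ω j)) ^ 2 ∂μ =
      k * (2 * p * (1 - p)) + (1 - p) * (1 - 2 * p) := by
  simp_rw [sum_mul_one_sub_two_mul_eq_sum_pairs _ _ (hD.assign_pairFst_add_pairSnd _)]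
  rw [integral_sq_sum_of_integral_mul_eq_zero
    (Y := fun m ω => (A ω i m.pairFst - A ω i m.pairSnd) * (1 - 2 * T ω m.pairFst))
    (fun m => (hD.memLp_mul_one_sub_two_mul_assign
      ((hD.memLp_adj _ _).sub (hD.memLp_adj _ _)) _).mono_exponent le_top)
    (fun m m' h => hD.integral_mul_eq_zero_of_ne i h)]
  simp_rw [mul_pow, hD.sq_one_sub_two_mul_assign, mul_one,
    fun m => hD.integral_sq_adj_sub_adj hp i (Fin.pairFst_ne_pairSnd m), ← Fin.half_eq_iff]
  rw [Finset.sum_add_distrib, Finset.sum_const, Finset.sum_ite_eq]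
  simp

end IsPairedERDesign

/-- Random design in the Erdős–Rényi model with self loops on `n = 2k` nodes:
the entries `A_{ij}`, `i < j`, are i.i.d. Bernoulli(p) (symmetric, `A_{ii}=1`),
the assignment pairs `(T_{2m-1}, T_{2m})` equal `(0,1)` or `(1,0)` with
probability `1/2` each, all independent. Then
`E[‖A(1ₙ - 2T)‖²] = n² p (1-p) + n (1-2p)(1-p)`; consequently
`E[‖A(1ₙ - 2T)‖²]/n² → p(1-p)`. -/
theorem random_design_imbalance
    {Ω : Type*} [MeasurableSpace Ω] {μ : Measure Ω} [IsProbabilityMeasure μ]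
    (p : ℝ) (hp : p ∈ Set.Ioo (0 : ℝ) 1) (k : ℕ)
    (A : Ω → Matrix (Fin (2 * k)) (Fin (2 * k)) ℝ)
    (hAmeas : ∀ i j, Measurable (fun ω => A ω i j))
    (hAdiag : ∀ ω i, A ω i i = 1)
    (hAsym : ∀ ω i j, A ω i j = A ω j i)
    (hAval : ∀ ω i j, i < j → (A ω i j = 0 ∨ A ω i j = 1))
    (hAp : ∀ i j : Fin (2 * k), i < j →
      μ {ω | A ω i j = 1} = ENNReal.ofReal p)
    (T : Ω → Fin (2 * k) → ℝ)
    (hTmeas : ∀ i, Measurable (fun ω => T ω i))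
    (hTval : ∀ ω i, T ω i = 0 ∨ T ω i = 1)
    (hTpair : ∀ ω (m : Fin k),
      T ω ⟨2 * m.val, by have := m.isLt; omega⟩ +
        T ω ⟨2 * m.val + 1, by have := m.isLt; omega⟩ = 1)
    (hThalf : ∀ m : Fin k,
      μ {ω | T ω ⟨2 * m.val, by have := m.isLt; omega⟩ = 1} = 1 / 2)
    (hindep : iIndepFun
      (Sum.elim
        (fun (e : {q : Fin (2 * k) × Fin (2 * k) // q.1 < q.2}) ω =>
          A ω e.val.1 e.val.2)
        (fun (m : Fin k) ω => T ω ⟨2 * m.val, by have := m.isLt; omega⟩)) μ) :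
    (∫ ω, ∑ i, (∑ j, A ω i j * (1 - 2 * T ω j)) ^ 2 ∂μ) =
        ((2 * k : ℝ)) ^ 2 * p * (1 - p) + (2 * k : ℝ) * (1 - 2 * p) * (1 - p) ∧
    Tendsto (fun n : ℕ =>
        ((n : ℝ) ^ 2 * p * (1 - p) + (n : ℝ) * (1 - 2 * p) * (1 - p)) / (n : ℝ) ^ 2)
      atTop (nhds (p * (1 - p))) := by
  have hD : IsPairedERDesign μ p A T :=
    ⟨hAmeas, hAdiag, hAsym, hAval, hAp, hTmeas, hTval, hTpair, hThalf, hindep⟩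
  refine ⟨?_, ?_⟩
  · have hrow (i : Fin (2 * k)) : MemLp (fun ω => ∑ j, A ω i j * (1 - 2 * T ω j)) 2 μ :=
      (memLp_finsetSum _ fun j _ =>
        hD.memLp_mul_one_sub_two_mul_assign (hD.memLp_adj i j) j).mono_exponent le_top
    rw [integral_finsetSum _ fun i _ => (hrow i).integrable_sq]
    simp_rw [hD.integral_sq_row hp.1.le]
    rw [Finset.sum_const, Finset.card_univ, Fintype.card_fin, nsmul_eq_mul]
    push_cast
    ring
  · have h := (tendsto_const_div_atTop_nhds_zero_nat ((1 - 2 * p) * (1 - p))).const_add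
      (p * (1 - p))
    rw [add_zero] at h
    refine h.congr' ?_
    filter_upwards [eventually_ne_atTop 0] with n hn
    field_simp
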